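/- The number of distinct unordered partitions of Z_q^N (N = (q^m-1)/(q-1)) obtained from column permutations of the fractal matrix M_{q,m} is exactly N! ; equivalently, for any two distinct permutations σ, τ of the columns of M_{q,m}, the resulting star matrices define different unordered families of subcubes. -/

import Mathlib

/-- The subcube of `(Z_q)^C` defined by a star pattern `p` (`none` = `*`):
all vectors agreeing with `p` on every coordinate where `p` is numerical. -/
def Subcube {q : ℕ} {C : Type} (p : C → Option (ZMod q)) : Set (C → ZMod q) :=
  {x | ∀ c : C, ∀ a : ZMod q, p c = some a → x c = a}

/-- The number of numerical entries of a star pattern. -/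
noncomputable def numCount {q : ℕ} {C : Type} (p : C → Option (ZMod q)) : ℕ :=
  Nat.card {c : C // (p c).isSome}

/-- The rows of the star matrix `M` define pairwise disjoint subcubes covering the cube. -/
def IsPartitionMatrix (q : ℕ) {R C : Type} (M : R → C → Option (ZMod q)) : Prop :=
  (∀ r r' : R, r ≠ r' → Subcube (M r) ∩ Subcube (M r') = ∅) ∧
  (∀ x : C → ZMod q, ∃ r : R, x ∈ Subcube (M r))

/-- A star matrix is A-primitive if every column has at least one numerical entry. -/
def APrimitive {q : ℕ} {R C : Type} (M : R → C → Option (ZMod q)) : Prop :=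
  ∀ c : C, ∃ r : R, (M r c).isSome

/-- Number of rows of the fractal matrix `M_{q,m}`. -/
def Nrows (q : ℕ) : ℕ → ℕ
  | 0 => 1
  | m + 1 => q * Nrows q m

/-- Number of columns of the fractal matrix `M_{q,m}`. -/
def Ncols (q : ℕ) : ℕ → ℕ
  | 0 => 0
  | m + 1 => 1 + q * Ncols q m

/-- Entry of the fractal matrix `M_{q,m}` in row `r`, column `c` (as natural number
indices): `M_{q,0}` has one row and no columns; `M_{q,m+1}` consists of `q` horizontal
stripes indexed by `a ∈ Z_q`, stripe `a` having the constant value `a` in the first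
column, a copy of `M_{q,m}` in the `a`-th of `q` column blocks, and all-stars elsewhere. -/
def fractalEntry (q : ℕ) : ℕ → ℕ → ℕ → Option (ZMod q)
  | 0, _, _ => none
  | m + 1, r, c =>
    if c = 0 then some (Nat.cast (r / Nrows q m))
    else if (c - 1) / Ncols q m = r / Nrows q m then
      fractalEntry q m (r % Nrows q m) ((c - 1) % Ncols q m)
    else none

/-- The fractal star matrix `M_{q,m}`. -/
def fractalMatrix (q m : ℕ) : Fin (Nrows q m) → Fin (Ncols q m) → Option (ZMod q) :=
  fun r c => fractalEntry q m r.1 c.1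

/-!
Write `M` for `M_{q,m}`. It suffices that the identity is the only column permutation `π` for
which every row of `M ∘ π` is a row of `M`: applied to `σ τ⁻¹` this gives injectivity of
`σ ↦ rows (M ∘ σ)`, whence the count `N!`.

This rigidity goes by induction on `m`. `M_{q,m+1}` is the stripe matrix built from `M_{q,m}`.
Its first column is its only column without stars (as `q ≥ 2`), so `π` fixes it, and then every
row of `M ∘ π` is a row of the same stripe. As every column of `M_{q,m}` has a numerical entry,
`π` maps each block of columns into itself, and on block `b` it induces a permutation which is
the identity by induction, as rows of stripe `b` restricted to block `b` are the rows of
`M_{q,m}`.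
-/

def IsColumnRigid {R C β : Type*} (M : R → C → β) : Prop :=
  ∀ π : Equiv.Perm C, Set.range (fun r => M r ∘ π) ⊆ Set.range M → π = 1

theorem IsColumnRigid.of_reindex {R R' C C' β : Type*} {M : R' → C' → β} (eR : R ≃ R')
    (eC : C ≃ C') (h : IsColumnRigid fun r c => M (eR r) (eC c)) : IsColumnRigid M := by
  intro π hπ
  have hconj : eC.symm.permCongr π = 1 := by
    refine h _ ?_
    rintro _ ⟨r, rfl⟩
    obtain ⟨r', hr'⟩ := hπ ⟨eR r, rfl⟩
    refine ⟨eR.symm r', funext fun c => ?_⟩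
    simpa using congrFun hr' (eC c)
  ext c
  simpa using congrArg (fun p => eC (p (eC.symm c))) hconj

theorem IsColumnRigid.injective {R C β : Type*} {M : R → C → β} (hM : IsColumnRigid M) :
    Function.Injective fun σ : Equiv.Perm C => Set.range fun r => M r ∘ σ := by
  intro σ τ hστ
  refine mul_inv_eq_one.mp (hM _ ?_)
  rintro _ ⟨r, rfl⟩
  obtain ⟨r', hr'⟩ : M r ∘ σ ∈ Set.range fun r => M r ∘ τ := hστ.subset ⟨r, rfl⟩
  exact ⟨r', funext fun c => by simpa using congrFun hr' (τ⁻¹ c)⟩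

-- Row `(a, s)` is row `s` of stripe `a`; column `none` is the first column and `some (b, c)` is
-- column `c` of block `b`.
def stripeMatrix {α R C : Type*} [DecidableEq α] (M : R → C → Option α) :
    α × R → Option (α × C) → Option α
  | (a, _), none => some a
  | (a, s), some (b, c) => if b = a then M s c else none

section stripeMatrix

variable {α R C : Type*} [DecidableEq α] {M : R → C → Option α}

theorem stripeMatrix_isSome [Nonempty α] [Nonempty R] (hM : ∀ c, ∃ r, (M r c).isSome) :
    ∀ y, ∃ x, (stripeMatrix M x y).isSome
  | none => ⟨Classical.arbitrary _, rfl⟩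
  | some (b, c) => by
    obtain ⟨r, hr⟩ := hM c
    exact ⟨(b, r), by simpa [stripeMatrix] using hr⟩

variable {π : Equiv.Perm (Option (α × C))}

-- The first column is the only one without stars.
theorem stripeMatrix_perm_none [Nontrivial α] [Nonempty R]
    (hπ : Set.range (fun x => stripeMatrix M x ∘ π) ⊆ Set.range (stripeMatrix M)) :
    π none = none := by
  rcases hπ0 : π none with _ | ⟨b, c⟩
  · rfl
  obtain ⟨a, hab⟩ := exists_ne b
  obtain ⟨x', hx'⟩ := hπ ⟨(a, Classical.arbitrary R), rfl⟩
  have := congrFun hx' none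
  simp [stripeMatrix, hπ0, Ne.symm hab] at this

theorem stripeMatrix_fst_eq_of_eq_comp (hπ_none : π none = none) {x x' : α × R}
    (h : stripeMatrix M x' = stripeMatrix M x ∘ π) : x'.1 = x.1 := by
  simpa [stripeMatrix, hπ_none] using congrFun h none

theorem stripeMatrix_perm_some [Nontrivial α] [Nonempty R]
    (hπ : Set.range (fun x => stripeMatrix M x ∘ π) ⊆ Set.range (stripeMatrix M))
    (hM : ∀ c, ∃ r, (M r c).isSome) (b : α) (c : C) : ∃ c', π (some (b, c)) = some (b, c') := by
  have hπ_none := stripeMatrix_perm_none hπ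
  rcases hπc : π (some (b, c)) with _ | ⟨b', c'⟩
  · exact absurd (π.injective (hπc.trans hπ_none.symm)) (by simp)
  obtain ⟨r, hr⟩ := hM c'
  obtain ⟨⟨a', s'⟩, hx'⟩ := hπ ⟨(b', r), rfl⟩
  obtain rfl : a' = b' := stripeMatrix_fst_eq_of_eq_comp hπ_none hx'
  have hsome := congrFun hx' (some (b, c))
  obtain rfl : b = a' := by
    by_contra hne
    simp only [stripeMatrix, hne, ↓reduceIte, Function.comp_apply, hπc] at hsome
    simp [← hsome] at hr
  exact ⟨c', rfl⟩

theorem stripeMatrix_isColumnRigid [Nontrivial α] [Nonempty R] [Finite C]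
    (hM : ∀ c, ∃ r, (M r c).isSome) (hrig : IsColumnRigid M) :
    IsColumnRigid (stripeMatrix M) := by
  intro π hπ
  have hπ_none := stripeMatrix_perm_none hπ
  choose g hg using stripeMatrix_perm_some hπ hM
  have hg_inj : ∀ b, Function.Injective (g b) := fun b c₁ c₂ h => by
    have : π (some (b, c₁)) = π (some (b, c₂)) := by rw [hg, hg, h]
    simpa using π.injective this
  have hg_id : ∀ b, g b = id := by
    intro b
    have hπb := hrig (Equiv.ofBijective _ (Finite.injective_iff_bijective.mp (hg_inj b))) ?_
    · exact funext fun c => by simpa using congrArg (· c) hπb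
    rintro _ ⟨s, rfl⟩
    obtain ⟨⟨a', s'⟩, hx'⟩ := hπ ⟨(b, s), rfl⟩
    obtain rfl : a' = b := stripeMatrix_fst_eq_of_eq_comp hπ_none hx'
    refine ⟨s', funext fun c => ?_⟩
    simpa [stripeMatrix, hg] using congrFun hx' (some (a', c))
  ext1 (_ | ⟨b, c⟩)
  · simp [hπ_none]
  · simp [hg, hg_id]

end stripeMatrix

instance Nrows.neZero (q m : ℕ) [NeZero q] : NeZero (Nrows q m) := by
  induction m with
  | zero => exact ⟨one_ne_zero⟩
  | succ m ih => exact ⟨mul_ne_zero (NeZero.ne q) (NeZero.ne (Nrows q m))⟩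

def stripeIndexEquiv (q n : ℕ) [NeZero q] : ZMod q × Fin n ≃ Fin (q * n) :=
  ((ZMod.finEquiv q).toEquiv.symm.prodCongr (Equiv.refl _)).trans finProdFinEquiv

theorem stripeIndexEquiv_val (q n : ℕ) [NeZero q] (a : ZMod q) (s : Fin n) :
    (stripeIndexEquiv q n (a, s) : ℕ) = s + n * a.val := by
  obtain ⟨q, rfl⟩ := Nat.exists_eq_succ_of_ne_zero (NeZero.ne q)
  rfl

def fractalRowEquiv (q m : ℕ) [NeZero q] : ZMod q × Fin (Nrows q m) ≃ Fin (Nrows q (m + 1)) :=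
  stripeIndexEquiv q (Nrows q m)

def fractalColEquiv (q m : ℕ) [NeZero q] :
    Option (ZMod q × Fin (Ncols q m)) ≃ Fin (Ncols q (m + 1)) :=
  ((Equiv.optionCongr (stripeIndexEquiv q (Ncols q m))).trans (finSuccEquiv _).symm).trans
    (finCongr (Nat.add_comm _ _))

theorem fractalEntry_succ_block {q m a b s c : ℕ} (hs : s < Nrows q m) (hc : c < Ncols q m) :
    fractalEntry q (m + 1) (s + Nrows q m * a) (c + Ncols q m * b + 1) =
      if b = a then fractalEntry q m s c else none := by
  have hN : 0 < Ncols q m := by omega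
  have hR : 0 < Nrows q m := by omega
  simp only [fractalEntry, Nat.add_one_ne_zero, if_false, Nat.add_sub_cancel,
    Nat.add_mul_div_left _ _ hN, Nat.add_mul_div_left _ _ hR, Nat.div_eq_of_lt hc,
    Nat.div_eq_of_lt hs, zero_add, Nat.add_mul_mod_self_left, Nat.mod_eq_of_lt hc,
    Nat.mod_eq_of_lt hs]

theorem fractalMatrix_succ_reindex (q m : ℕ) [NeZero q] :
    (fun x y => fractalMatrix q (m + 1) (fractalRowEquiv q m x) (fractalColEquiv q m y)) =
      stripeMatrix (fractalMatrix q m) := by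
  funext ⟨a, s⟩ y
  have hr : (fractalRowEquiv q m (a, s) : ℕ) = s + Nrows q m * a.val :=
    stripeIndexEquiv_val q _ a s
  rcases y with _ | ⟨b, c⟩
  · have hR : 0 < Nrows q m := by omega
    have hc : (fractalColEquiv q m none : ℕ) = 0 := rfl
    simp only [fractalMatrix, hr, hc, fractalEntry, if_true, Nat.add_mul_div_left _ _ hR,
      Nat.div_eq_of_lt s.isLt, zero_add, ZMod.natCast_zmod_val, stripeMatrix]
  · have hc : (fractalColEquiv q m (some (b, c)) : ℕ) = c + Ncols q m * b.val + 1 := by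
      change ((stripeIndexEquiv q _ (b, c)).succ : ℕ) = _
      rw [Fin.val_succ, stripeIndexEquiv_val]
    simp only [fractalMatrix, hr, hc, fractalEntry_succ_block s.isLt c.isLt, stripeMatrix,
      (ZMod.val_injective q).eq_iff]

theorem fractalMatrix_aPrimitive (q m : ℕ) [NeZero q] : APrimitive (fractalMatrix q m) := by
  induction m with
  | zero => exact fun c => c.elim0
  | succ m ih =>
    intro c
    obtain ⟨x, hx⟩ := stripeMatrix_isSome ih ((fractalColEquiv q m).symm c)
    rw [← fractalMatrix_succ_reindex] at hx
    exact ⟨fractalRowEquiv q m x, by simpa using hx⟩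

theorem fractalMatrix_isColumnRigid (q m : ℕ) [Fact (1 < q)] :
    IsColumnRigid (fractalMatrix q m) := by
  induction m with
  | zero => exact fun π _ => Subsingleton.elim (α := Equiv.Perm (Fin 0)) π 1
  | succ m ih =>
    refine IsColumnRigid.of_reindex (fractalRowEquiv q m) (fractalColEquiv q m) ?_
    rw [fractalMatrix_succ_reindex]
    exact stripeMatrix_isColumnRigid (fractalMatrix_aPrimitive q m) ih

theorem stmt10_general (q m : ℕ) (hq : 2 ≤ q) :
    (∀ σ τ : Equiv.Perm (Fin (Ncols q m)),
      (Set.range fun r : Fin (Nrows q m) => fun c => fractalMatrix q m r (σ c)) =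
        (Set.range fun r : Fin (Nrows q m) => fun c => fractalMatrix q m r (τ c)) →
      σ = τ) ∧
    Nat.card {P : Set (Fin (Ncols q m) → Option (ZMod q)) //
        ∃ σ : Equiv.Perm (Fin (Ncols q m)),
          P = Set.range fun r : Fin (Nrows q m) => fun c => fractalMatrix q m r (σ c)} =
      Nat.factorial (Ncols q m) := by
  have : Fact (1 < q) := ⟨hq⟩
  have hinj := (fractalMatrix_isColumnRigid q m).injective
  refine ⟨fun σ τ h => hinj h, ?_⟩
  calc Nat.card {P // ∃ σ : Equiv.Perm (Fin (Ncols q m)), P = _}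
      = Nat.card (Set.range fun σ : Equiv.Perm (Fin (Ncols q m)) =>
          Set.range fun r => fractalMatrix q m r ∘ σ) :=
        Nat.card_congr (Equiv.subtypeEquivRight fun _ => exists_congr fun _ => eq_comm)
    _ = (Ncols q m).factorial := by
        rw [Nat.card_range_of_injective hinj, Nat.card_perm, Nat.card_fin]

/-- Distinct column permutations of the fractal matrix `M_{q,m}` yield distinct unordered
partitions (distinct sets of star patterns); hence the number of unordered partitions
obtained from column permutations of `M_{q,m}` is exactly `N!`, `N = (q^m-1)/(q-1)`. -/
theorem stmt10 (q m : ℕ) (hq : 2 ≤ q) (hm : 1 ≤ m) :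
    (∀ σ τ : Equiv.Perm (Fin (Ncols q m)),
      (Set.range fun r : Fin (Nrows q m) => fun c => fractalMatrix q m r (σ c)) =
        (Set.range fun r : Fin (Nrows q m) => fun c => fractalMatrix q m r (τ c)) →
      σ = τ) ∧
    Nat.card {P : Set (Fin (Ncols q m) → Option (ZMod q)) //
        ∃ σ : Equiv.Perm (Fin (Ncols q m)),
          P = Set.range fun r : Fin (Nrows q m) => fun c => fractalMatrix q m r (σ c)} =
      Nat.factorial (Ncols q m) :=
  stmt10_general q m hq
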